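/- SO_3(R) contains no subgroup isomorphic to Z × F_2, where F_2 is the free group of rank 2. -/

import Mathlib

/-!
Let `A ≠ 1` be the image of the generator of `ℤ`. As a rotation of odd-dimensional space it
fixes an axis `v`, and since `A ≠ 1` its fixed space is exactly the line through `v`. Every
orthogonal `B` commuting with `A` preserves that line, so `B v = ± v` and `B²` fixes `v`.
Rotations with a common axis commute, so the images of `a²` and `b²` commute for the free
generators `a, b`, contradicting injectivity since `a² b² ≠ b² a²` in `F₂`.
-/

namespace Matrix

section CommRing

variable {R : Type*} [CommRing R]

theorem dotProduct_mulVec_mulVec_of_mem_orthogonalGroup {n : Type*} [Fintype n] [DecidableEq n]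
    {A : Matrix n n R} (hA : A ∈ orthogonalGroup n R) (x y : n → R) :
    A *ᵥ x ⬝ᵥ A *ᵥ y = x ⬝ᵥ y := by
  rw [dotProduct_mulVec, ← vecMul_transpose, vecMul_vecMul, (mem_orthogonalGroup_iff' n R).mp hA,
    vecMul_one]

theorem mulVec_cross_of_mem_specialOrthogonalGroup {A : Matrix (Fin 3) (Fin 3) R}
    (hA : A ∈ specialOrthogonalGroup (Fin 3) R) (x y : Fin 3 → R) :
    A *ᵥ (x ⨯₃ y) = (A *ᵥ x) ⨯₃ (A *ᵥ y) := by
  obtain ⟨hO, hdet⟩ := mem_specialOrthogonalGroup_iff.mp hA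
  -- Pairing either side with `A z` gives the triple product `det ![z, x, y]`, as `det A = 1`.
  have hrows (z : Fin 3 → R) : ![A *ᵥ z, A *ᵥ x, A *ᵥ y] = of ![z, x, y] * Aᵀ := by
    ext i j
    fin_cases i <;> simp [mul_apply, mulVec, dotProduct, mul_comm]
  refine dotProduct_eq _ _ fun u => ?_
  obtain ⟨z, rfl⟩ : ∃ z, A *ᵥ z = u :=
    ⟨Aᵀ *ᵥ u, by rw [mulVec_mulVec, (mem_orthogonalGroup_iff _ _).mp hO, one_mulVec]⟩
  rw [dotProduct_comm _ (A *ᵥ z), dotProduct_comm _ (A *ᵥ z),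
    dotProduct_mulVec_mulVec_of_mem_orthogonalGroup hO, triple_product_eq_det,
    triple_product_eq_det, hrows, det_mul, det_transpose, hdet, mul_one]
  rfl

/-- The expansion of `x` in the orthogonal frame `v, w, v ⨯₃ w`, with denominators cleared. -/
theorem dotProduct_self_mul_smul_eq_of_dotProduct_eq_zero {v w : Fin 3 → R} (hvw : v ⬝ᵥ w = 0)
    (x : Fin 3 → R) :
    ((v ⬝ᵥ v) * (w ⬝ᵥ w)) • x = ((x ⬝ᵥ v) * (w ⬝ᵥ w)) • v + ((x ⬝ᵥ w) * (v ⬝ᵥ v)) • w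
      + (x ⬝ᵥ v ⨯₃ w) • v ⨯₃ w := by
  ext i
  linear_combination (norm := skip) (-((x ⬝ᵥ v) * w i + (x ⬝ᵥ w) * v i - (v ⬝ᵥ w) * x i)) * hvw
  fin_cases i <;> simp [cross_apply, dotProduct, Fin.sum_univ_three] <;> ring

end CommRing

theorem exists_mulVec_eq_self_of_mem_specialOrthogonalGroup {K : Type*} [Field K] [CharZero K]
    {n : Type*} [Fintype n] [DecidableEq n] (hn : Odd (Fintype.card n)) {A : Matrix n n K}
    (hA : A ∈ specialOrthogonalGroup n K) : ∃ v ≠ 0, A *ᵥ v = v := by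
  obtain ⟨hO, hdet⟩ := mem_specialOrthogonalGroup_iff.mp hA
  have hneg : (A - 1).det = -(A - 1).det := calc
    (A - 1).det = (Aᵀ * (A - 1)).det := by rw [det_mul, det_transpose, hdet, one_mul]
    _ = (-(A - 1)).det := by
      rw [mul_sub, (mem_orthogonalGroup_iff' n K).mp hO, mul_one, ← transpose_one, ← transpose_sub,
        det_transpose, neg_sub, transpose_one]
    _ = -(A - 1).det := by rw [det_neg, hn.neg_one_pow, neg_one_mul]
  obtain ⟨v, hv, hAv⟩ := exists_mulVec_eq_zero_iff.mpr (CharZero.eq_neg_self_iff.mp hneg)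
  exact ⟨v, hv, by rwa [sub_mulVec, one_mulVec, sub_eq_zero] at hAv⟩

theorem exists_ne_zero_dotProduct_eq_zero {K : Type*} [Field K] {n : Type*} [Fintype n]
    (hn : 1 < Fintype.card n) (v : n → K) : ∃ w ≠ 0, v ⬝ᵥ w = 0 := by
  have : LinearMap.ker (dotProductBilin K K v) ≠ ⊥ :=
    LinearMap.ker_ne_bot_of_finrank_lt (by simpa using hn)
  obtain ⟨w, hw, hw0⟩ := Submodule.ne_bot_iff _ |>.mp this
  exact ⟨w, hw0, hw⟩

section OrderedField

variable {K : Type*} [Field K] [LinearOrder K] [IsStrictOrderedRing K]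

theorem ext_of_mulVec_cross_frame {M N : Matrix (Fin 3) (Fin 3) K} {v w : Fin 3 → K}
    (hv : v ≠ 0) (hw : w ≠ 0) (hvw : v ⬝ᵥ w = 0) (h₁ : M *ᵥ v = N *ᵥ v) (h₂ : M *ᵥ w = N *ᵥ w)
    (h₃ : M *ᵥ (v ⨯₃ w) = N *ᵥ (v ⨯₃ w)) : M = N := by
  have hk : (v ⬝ᵥ v) * (w ⬝ᵥ w) ≠ 0 :=
    mul_ne_zero (dotProduct_self_eq_zero.not.mpr hv) (dotProduct_self_eq_zero.not.mpr hw)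
  refine ext_iff_mulVec.mpr fun x => smul_right_injective _ hk ?_
  dsimp only
  rw [← mulVec_smul, ← mulVec_smul, dotProduct_self_mul_smul_eq_of_dotProduct_eq_zero hvw x]
  simp only [mulVec_add, mulVec_smul, h₁, h₂, h₃]

theorem eq_one_of_mulVec_eq_self_of_dotProduct_eq_zero {A : Matrix (Fin 3) (Fin 3) K}
    (hA : A ∈ specialOrthogonalGroup (Fin 3) K) {v w : Fin 3 → K} (hv : v ≠ 0) (hw : w ≠ 0)
    (hvw : v ⬝ᵥ w = 0) (hAv : A *ᵥ v = v) (hAw : A *ᵥ w = w) : A = 1 :=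
  ext_of_mulVec_cross_frame hv hw hvw (by rw [hAv, one_mulVec]) (by rw [hAw, one_mulVec])
    (by rw [mulVec_cross_of_mem_specialOrthogonalGroup hA, hAv, hAw, one_mulVec])

theorem exists_eq_smul_of_mulVec_eq_self {A : Matrix (Fin 3) (Fin 3) K}
    (hA : A ∈ specialOrthogonalGroup (Fin 3) K) (hA1 : A ≠ 1) {v x : Fin 3 → K} (hv : v ≠ 0)
    (hAv : A *ᵥ v = v) (hAx : A *ᵥ x = x) : ∃ c : K, x = c • v := by
  set w := (v ⬝ᵥ v) • x - (v ⬝ᵥ x) • v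
  have hvw : v ⬝ᵥ w = 0 := by simp only [w, dotProduct_sub, dotProduct_smul, smul_eq_mul]; ring
  have hAw : A *ᵥ w = w := by simp only [w, mulVec_sub, mulVec_smul, hAv, hAx]
  have hw : w = 0 := by
    by_contra hw
    exact hA1 (eq_one_of_mulVec_eq_self_of_dotProduct_eq_zero hA hv hw hvw hAv hAw)
  have hvv : v ⬝ᵥ v ≠ 0 := dotProduct_self_eq_zero.not.mpr hv
  refine ⟨(v ⬝ᵥ x) / (v ⬝ᵥ v), smul_right_injective _ hvv ?_⟩
  simp only [smul_smul, mul_div_cancel₀ _ hvv]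
  exact sub_eq_zero.mp hw

theorem sq_mulVec_eq_self_of_commute {A B : Matrix (Fin 3) (Fin 3) K}
    (hA : A ∈ specialOrthogonalGroup (Fin 3) K) (hA1 : A ≠ 1) (hB : B ∈ orthogonalGroup (Fin 3) K)
    (hAB : Commute A B) {v : Fin 3 → K} (hv : v ≠ 0) (hAv : A *ᵥ v = v) : (B ^ 2) *ᵥ v = v := by
  obtain ⟨c, hc⟩ := exists_eq_smul_of_mulVec_eq_self hA hA1 hv hAv (x := B *ᵥ v)
    (by rw [mulVec_mulVec, hAB.eq, ← mulVec_mulVec, hAv])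
  have hc2 : c * c = 1 := by
    have h := dotProduct_mulVec_mulVec_of_mem_orthogonalGroup hB v v
    rw [hc, smul_dotProduct, dotProduct_smul, smul_eq_mul, smul_eq_mul, ← mul_assoc] at h
    exact mul_right_cancel₀ (dotProduct_self_eq_zero.not.mpr hv) (h.trans (one_mul _).symm)
  rw [sq, ← mulVec_mulVec, hc, mulVec_smul, hc, smul_smul, hc2, one_smul]

theorem exists_mulVec_eq_smul_add_smul_cross {D : Matrix (Fin 3) (Fin 3) K}
    (hD : D ∈ orthogonalGroup (Fin 3) K) {v w : Fin 3 → K} (hv : v ≠ 0) (hw : w ≠ 0)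
    (hvw : v ⬝ᵥ w = 0) (hDv : D *ᵥ v = v) : ∃ p q : K, D *ᵥ w = p • w + q • v ⨯₃ w := by
  have hk : (v ⬝ᵥ v) * (w ⬝ᵥ w) ≠ 0 :=
    mul_ne_zero (dotProduct_self_eq_zero.not.mpr hv) (dotProduct_self_eq_zero.not.mpr hw)
  have hperp : D *ᵥ w ⬝ᵥ v = 0 := calc
    D *ᵥ w ⬝ᵥ v = D *ᵥ w ⬝ᵥ D *ᵥ v := by rw [hDv]
    _ = 0 := by rw [dotProduct_mulVec_mulVec_of_mem_orthogonalGroup hD, dotProduct_comm, hvw]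
  have h := dotProduct_self_mul_smul_eq_of_dotProduct_eq_zero hvw (D *ᵥ w)
  rw [hperp, zero_mul, zero_smul, zero_add] at h
  refine ⟨(D *ᵥ w ⬝ᵥ w) * (v ⬝ᵥ v) / ((v ⬝ᵥ v) * (w ⬝ᵥ w)),
    (D *ᵥ w ⬝ᵥ v ⨯₃ w) / ((v ⬝ᵥ v) * (w ⬝ᵥ w)), smul_right_injective _ hk ?_⟩
  simpa only [smul_add, smul_smul, mul_div_cancel₀ _ hk] using h

theorem commute_of_mulVec_eq_self {D E : Matrix (Fin 3) (Fin 3) K}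
    (hD : D ∈ specialOrthogonalGroup (Fin 3) K) (hE : E ∈ specialOrthogonalGroup (Fin 3) K)
    {v : Fin 3 → K} (hv : v ≠ 0) (hDv : D *ᵥ v = v) (hEv : E *ᵥ v = v) : Commute D E := by
  obtain ⟨w, hw, hvw⟩ := exists_ne_zero_dotProduct_eq_zero (by simp) v
  obtain ⟨p, q, hDw⟩ := exists_mulVec_eq_smul_add_smul_cross hD.1 hv hw hvw hDv
  obtain ⟨p', q', hEw⟩ := exists_mulVec_eq_smul_add_smul_cross hE.1 hv hw hvw hEv
  have hDcross (x : Fin 3 → K) : D *ᵥ (v ⨯₃ x) = v ⨯₃ (D *ᵥ x) := by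
    rw [mulVec_cross_of_mem_specialOrthogonalGroup hD, hDv]
  have hEcross (x : Fin 3 → K) : E *ᵥ (v ⨯₃ x) = v ⨯₃ (E *ᵥ x) := by
    rw [mulVec_cross_of_mem_specialOrthogonalGroup hE, hEv]
  -- On `v⊥` both act as `p + q J` with `J = (v ⨯₃ ·)`, and polynomials in `J` commute.
  have hDEw : D *ᵥ (E *ᵥ w) = E *ᵥ (D *ᵥ w) := by
    simp only [hDw, hEw, mulVec_add, mulVec_smul, hDcross, hEcross, map_add, map_smul]
    module
  refine ext_of_mulVec_cross_frame hv hw hvw ?_ ?_ ?_ <;> simp only [← mulVec_mulVec]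
  · rw [hEv, hDv, hEv]
  · exact hDEw
  · rw [hEcross, hDcross, hDEw, hDcross, hEcross]

theorem commute_sq_sq_of_commute {A B C : Matrix (Fin 3) (Fin 3) K}
    (hA : A ∈ specialOrthogonalGroup (Fin 3) K) (hB : B ∈ specialOrthogonalGroup (Fin 3) K)
    (hC : C ∈ specialOrthogonalGroup (Fin 3) K) (hA1 : A ≠ 1) (hAB : Commute A B)
    (hAC : Commute A C) : Commute (B ^ 2) (C ^ 2) := by
  obtain ⟨v, hv, hAv⟩ := exists_mulVec_eq_self_of_mem_specialOrthogonalGroup (by decide) hA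
  exact commute_of_mulVec_eq_self (pow_mem hB 2) (pow_mem hC 2) hv
    (sq_mulVec_eq_self_of_commute hA hA1 hB.1 hAB hv hAv)
    (sq_mulVec_eq_self_of_commute hA hA1 hC.1 hAC hv hAv)

end OrderedField

end Matrix

theorem so3_no_Z_times_F2 :
    ¬ ∃ f : Multiplicative ℤ × FreeGroup (Fin 2) →* Matrix (Fin 3) (Fin 3) ℝ,
      (∀ g, f g ∈ Matrix.specialOrthogonalGroup (Fin 3) ℝ) ∧ Function.Injective f := by
  rintro ⟨f, hf, hinj⟩
  let z : Multiplicative ℤ × FreeGroup (Fin 2) := (Multiplicative.ofAdd 1, 1)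
  let x (i : Fin 2) : Multiplicative ℤ × FreeGroup (Fin 2) := (1, FreeGroup.of i)
  have hz (g : Multiplicative ℤ × FreeGroup (Fin 2)) : Commute z g :=
    Prod.ext (Commute.all _ _) (Commute.one_left _)
  have hcomm := Matrix.commute_sq_sq_of_commute (hf z) (hf (x 0)) (hf (x 1))
    ((map_ne_one_iff f hinj).mpr (by decide)) ((hz _).map f) ((hz _).map f)
  rw [← map_pow, ← map_pow, commute_map_iff hinj] at hcomm
  exact absurd (congrArg Prod.snd hcomm.eq) (by decide)
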